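/- arXiv:0711.3849 — 2 statements merged into one kernel-verified Lean document; each statement's English description precedes it below -/
import Mathlib

section
/- Let p be an odd prime and let θ ∈ ℤ_pˣ be a unit which is not a square in ℚ_p. Put v₁ = (2θ, 0, 0, 1, 1) ∈ ℚ_p⁵, and for r ∈ ℕ let d_r = diag(p^r, 1, 1, 1, p^{−r}). Let x = (x₁,…,x₅) ∈ ℚ_p⁵ satisfy 2x₁x₅ + 2x₂x₄ + x₃² = 4θ. Then for every r ∈ ℕ: there exists k ∈ K with k·(d_r·v₁) = x if and only if max_{1≤i≤5} ‖x_i‖ = p^r. Consequently every point of the sphere {v ∈ ℚ_p⁵ : 2v₁v₅ + 2v₂v₄ + v₃² = 4θ} lies in exactly one K-orbit K·(d_r·v₁), r ≥ 0. -/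
/-!
Every `k ∈ K` preserves `Q`, and `k` and its inverse `J kᵀ J` have integral entries, so `k`
preserves the sup norm; hence `‖x‖ = ‖d_r v₁‖ = p ^ r` is necessary. Conversely, for odd `p` every
primitive vector `y` is `K`-equivalent to `(Q(y)/2, 0, 0, 0, 1)`: `J` or a lower unipotent `J n J`
makes the last coordinate a unit, the torus makes it `1`, and an upper unipotent `n` clears the
middle coordinates. Rescaling by a coordinate of maximal norm then shows that the `K`-orbit of a
nonzero vector is determined by its norm and its value under `Q`. Finally `‖Q(x)‖ = ‖4θ‖ = 1`
forces `‖x‖ ≥ 1`, so the norm of a point of the sphere is `p ^ r` for a unique `r ≥ 0`.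
-/

open Matrix

noncomputable section

variable (p : ℕ) [Fact p.Prime]

/-- The 5×5 matrix `J` over `ℚ_p`. -/
def J5 : Matrix (Fin 5) (Fin 5) ℚ_[p] :=
  Matrix.of fun i j => if (i : ℕ) + (j : ℕ) = 4 then 1 else 0

/-- The maximal compact subgroup `K = SO(3,2;ℤ_p)` of `G`. -/
def Kgp : Set (Matrix (Fin 5) (Fin 5) ℚ_[p]) :=
  {g | gᵀ * J5 p * g = J5 p ∧ g.det = 1 ∧ ∀ i j, ‖g i j‖ ≤ 1}

/-- The matrix `d_r = diag(p^r, 1, 1, 1, p^{−r})`. -/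
def dmat (r : ℕ) : Matrix (Fin 5) (Fin 5) ℚ_[p] :=
  Matrix.diagonal ![(p : ℚ_[p]) ^ r, 1, 1, 1, ((p : ℚ_[p]) ^ r)⁻¹]

section Ultrametric

variable {𝕜 : Type*} [NormedField 𝕜] [IsUltrametricDist 𝕜] {l m n : Type*}
  [Fintype m] [Fintype n]

theorem Matrix.norm_mulVec_le_of_forall_norm_le_one {A : Matrix m n 𝕜}
    (hA : ∀ i j, ‖A i j‖ ≤ 1) (v : n → 𝕜) : ‖A *ᵥ v‖ ≤ ‖v‖ :=
  (pi_norm_le_iff_of_nonneg (norm_nonneg v)).2 fun i =>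
    IsUltrametricDist.norm_sum_le_of_forall_le_of_nonneg (norm_nonneg v) fun j _ => by
      rw [norm_mul]
      exact (mul_le_of_le_one_left (norm_nonneg _) (hA i j)).trans (norm_le_pi_norm v j)

theorem Matrix.norm_mul_apply_le_one {A : Matrix m n 𝕜} {B : Matrix n l 𝕜}
    (hA : ∀ i j, ‖A i j‖ ≤ 1) (hB : ∀ i j, ‖B i j‖ ≤ 1) (i : m) (j : l) :
    ‖(A * B) i j‖ ≤ 1 :=
  calc ‖(A * B) i j‖ = ‖(A *ᵥ fun k => B k j) i‖ := rfl
    _ ≤ ‖fun k => B k j‖ :=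
      (norm_le_pi_norm _ i).trans (norm_mulVec_le_of_forall_norm_le_one hA _)
    _ ≤ 1 := (pi_norm_le_iff_of_nonneg zero_le_one).2 fun k => hB k j

end Ultrametric

theorem IsUltrametricDist.norm_add_eq_left_of_norm_lt {E : Type*} [SeminormedAddGroup E]
    [IsUltrametricDist E] {u w : E} (h : ‖w‖ < ‖u‖) : ‖u + w‖ = ‖u‖ := by
  rw [norm_add_eq_max_of_norm_ne_norm h.ne', max_eq_left h.le]

theorem pi_norm_eq_iff {ι E : Type*} [Fintype ι] [Nonempty ι] [SeminormedAddGroup E]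
    (f : ι → E) (a : ℝ) : ‖f‖ = a ↔ (∀ i, ‖f i‖ ≤ a) ∧ ∃ i, ‖f i‖ = a := by
  constructor
  · rintro rfl
    exact ⟨norm_le_pi_norm f, (IsGreatest.pi_norm f).1⟩
  · rintro ⟨hle, i, hi⟩
    exact le_antisymm ((pi_norm_le_iff_of_nonneg (hi ▸ norm_nonneg _)).2 hle)
      (hi ▸ norm_le_pi_norm f i)

theorem Matrix.IsSymm.ext_of_forall_dotProduct_mulVec {R n : Type*} [CommRing R] [IsDomain R]
    [NeZero (2 : R)] [Fintype n] [DecidableEq n] {A B : Matrix n n R} (hA : A.IsSymm)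
    (hB : B.IsSymm) (h : ∀ v, v ⬝ᵥ A *ᵥ v = v ⬝ᵥ B *ᵥ v) : A = B := by
  ext i j
  have hi := h (Pi.single i 1)
  have hj := h (Pi.single j 1)
  have hij := h (Pi.single i 1 + Pi.single j 1)
  simp only [mulVec_add, dotProduct_add, add_dotProduct, mulVec_single_one, col_apply,
    single_dotProduct, one_mul] at hi hj hij
  have h2 : (2 : R) * A i j = 2 * B i j := by
    linear_combination hij - hi - hj - hA.apply i j + hB.apply i j
  exact mul_left_cancel₀ two_ne_zero h2

section

variable {p}

theorem Padic.norm_two_le_one : ‖(2 : ℚ_[p])‖ ≤ 1 := by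
  simpa using IsUltrametricDist.norm_natCast_le_one ℚ_[p] 2

theorem Padic.norm_two_eq_one (hp : p ≠ 2) : ‖(2 : ℚ_[p])‖ = 1 := by
  simpa using Padic.norm_natCast_eq_one_iff.2 ((Nat.coprime_primes Fact.out Nat.prime_two).2 hp)

theorem Padic.norm_mul_add_sq_div_two_le_one (hp : p ≠ 2) {a b c : ℚ_[p]} (ha : ‖a‖ ≤ 1)
    (hb : ‖b‖ ≤ 1) (hc : ‖c‖ ≤ 1) : ‖a * c + b ^ 2 / 2‖ ≤ 1 := by
  refine (IsUltrametricDist.norm_add_le_max _ _).trans (max_le ?_ ?_)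
  · rw [norm_mul]
    exact mul_le_one₀ ha (norm_nonneg c) hc
  · rw [norm_div, norm_two_eq_one hp, div_one, norm_pow]
    exact pow_le_one₀ (norm_nonneg b) hb

def quadForm (v : Fin 5 → ℚ_[p]) : ℚ_[p] := v ⬝ᵥ J5 p *ᵥ v

theorem J5_mulVec (v : Fin 5 → ℚ_[p]) : J5 p *ᵥ v = ![v 4, v 3, v 2, v 1, v 0] := by
  ext i; fin_cases i <;> simp [J5, mulVec, dotProduct, Fin.sum_univ_five]

theorem quadForm_eq (v : Fin 5 → ℚ_[p]) :
    quadForm v = 2 * v 0 * v 4 + 2 * v 1 * v 3 + v 2 ^ 2 := by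
  simp only [quadForm, J5_mulVec, dotProduct, Fin.sum_univ_five]
  simp only [cons_val_zero, cons_val_one, cons_val]
  ring

theorem quadForm_smul (c : ℚ_[p]) (v : Fin 5 → ℚ_[p]) :
    quadForm (c • v) = c ^ 2 * quadForm v := by
  simp only [quadForm_eq, Pi.smul_apply, smul_eq_mul]
  ring

theorem norm_quadForm_le (v : Fin 5 → ℚ_[p]) : ‖quadForm v‖ ≤ ‖v‖ ^ 2 := by
  have hv : ∀ i j, ‖v i * v j‖ ≤ ‖v‖ ^ 2 := fun i j => by
    rw [norm_mul, sq]
    exact mul_le_mul (norm_le_pi_norm v i) (norm_le_pi_norm v j) (norm_nonneg _) (norm_nonneg _)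
  have h2 : ∀ i j, ‖2 * v i * v j‖ ≤ ‖v‖ ^ 2 := fun i j => by
    rw [mul_assoc, norm_mul]
    exact (mul_le_of_le_one_left (norm_nonneg _) Padic.norm_two_le_one).trans (hv i j)
  rw [quadForm_eq, sq (v 2)]
  exact (IsUltrametricDist.norm_add_le_max _ _).trans (max_le
    ((IsUltrametricDist.norm_add_le_max _ _).trans (max_le (h2 0 4) (h2 1 3))) (hv 2 2))

variable (p) in
theorem J5_transpose : (J5 p)ᵀ = J5 p := by
  ext i j; simp [J5, add_comm]

variable (p) in
theorem J5_mul_J5 : J5 p * J5 p = 1 := by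
  ext i j; fin_cases i <;> fin_cases j <;> simp [J5, mul_apply, Fin.sum_univ_five]

variable (p) in
theorem J5_eq_permMatrix :
    J5 p = (Equiv.swap 0 4 * Equiv.swap 1 3 : Equiv.Perm (Fin 5)).permMatrix ℚ_[p] := by
  ext i j
  fin_cases i <;> fin_cases j <;>
    simp [J5, Equiv.Perm.permMatrix, PEquiv.toMatrix_apply, Equiv.swap_apply_def]

variable (p) in
theorem det_J5 : (J5 p).det = 1 := by
  rw [J5_eq_permMatrix, det_permutation, Equiv.Perm.sign_mul, Equiv.Perm.sign_swap (by decide),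
    Equiv.Perm.sign_swap (by decide)]
  simp

theorem norm_J5_apply_le_one (i j : Fin 5) : ‖J5 p i j‖ ≤ 1 := by
  simp only [J5, of_apply]
  split_ifs <;> simp

theorem quadForm_mulVec_eq (k : Matrix (Fin 5) (Fin 5) ℚ_[p]) (v : Fin 5 → ℚ_[p]) :
    quadForm (k *ᵥ v) = v ⬝ᵥ (kᵀ * J5 p * k) *ᵥ v := by
  rw [quadForm, ← mulVec_mulVec, ← mulVec_mulVec, dotProduct_mulVec v kᵀ, vecMul_transpose]

namespace Kgp

theorem quadForm_mulVec {k : Matrix (Fin 5) (Fin 5) ℚ_[p]} (hk : k ∈ Kgp p)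
    (v : Fin 5 → ℚ_[p]) : quadForm (k *ᵥ v) = quadForm v := by
  rw [quadForm_mulVec_eq, hk.1, quadForm]

theorem mem_of_quadForm_mulVec {k : Matrix (Fin 5) (Fin 5) ℚ_[p]} (hdet : k.det = 1)
    (hk : ∀ i j, ‖k i j‖ ≤ 1) (hQ : ∀ v, quadForm (k *ᵥ v) = quadForm v) : k ∈ Kgp p := by
  refine ⟨IsSymm.ext_of_forall_dotProduct_mulVec ?_ (J5_transpose p) fun v => ?_, hdet, hk⟩
  · simp [IsSymm, transpose_mul, J5_transpose, Matrix.mul_assoc]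
  · rw [← quadForm_mulVec_eq, hQ, quadForm]

theorem one_mem : (1 : Matrix (Fin 5) (Fin 5) ℚ_[p]) ∈ Kgp p :=
  mem_of_quadForm_mulVec det_one (fun i j => by rw [one_apply]; split_ifs <;> simp)
    fun v => by rw [one_mulVec]

theorem mul_mem {g k : Matrix (Fin 5) (Fin 5) ℚ_[p]} (hg : g ∈ Kgp p) (hk : k ∈ Kgp p) :
    g * k ∈ Kgp p :=
  mem_of_quadForm_mulVec (by rw [det_mul, hg.2.1, hk.2.1, one_mul])
    (norm_mul_apply_le_one hg.2.2 hk.2.2)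
    fun v => by rw [← mulVec_mulVec, quadForm_mulVec hg, quadForm_mulVec hk]

theorem J5_mem : J5 p ∈ Kgp p :=
  mem_of_quadForm_mulVec (det_J5 p) norm_J5_apply_le_one fun v => by
    simp only [quadForm_eq, J5_mulVec]
    simp only [cons_val_zero, cons_val_one, cons_val]
    ring

theorem J5_mul_transpose_mul_J5_mul {k : Matrix (Fin 5) (Fin 5) ℚ_[p]} (hk : k ∈ Kgp p) :
    J5 p * kᵀ * J5 p * k = 1 := by
  rw [show J5 p * kᵀ * J5 p * k = J5 p * (kᵀ * J5 p * k) by simp only [Matrix.mul_assoc], hk.1,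
    J5_mul_J5]

theorem J5_mul_transpose_mul_J5_mem {k : Matrix (Fin 5) (Fin 5) ℚ_[p]} (hk : k ∈ Kgp p) :
    J5 p * kᵀ * J5 p ∈ Kgp p := by
  have hinv : k * (J5 p * kᵀ * J5 p) = 1 := mul_eq_one_comm.1 (J5_mul_transpose_mul_J5_mul hk)
  refine mem_of_quadForm_mulVec ?_ ?_ fun v => ?_
  · rw [det_mul, det_mul, det_transpose, hk.2.1, det_J5]
    ring
  · exact norm_mul_apply_le_one (norm_mul_apply_le_one norm_J5_apply_le_one
      (fun i j => hk.2.2 j i)) norm_J5_apply_le_one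
  · rw [← quadForm_mulVec hk, mulVec_mulVec, hinv, one_mulVec]

end Kgp

def SameKOrbit (v w : Fin 5 → ℚ_[p]) : Prop := ∃ k ∈ Kgp p, k *ᵥ v = w

namespace SameKOrbit

variable {u v w : Fin 5 → ℚ_[p]}

theorem of_mem {k : Matrix (Fin 5) (Fin 5) ℚ_[p]} (hk : k ∈ Kgp p) (v : Fin 5 → ℚ_[p]) :
    SameKOrbit v (k *ᵥ v) :=
  ⟨k, hk, rfl⟩

theorem refl (v : Fin 5 → ℚ_[p]) : SameKOrbit v v := ⟨1, Kgp.one_mem, one_mulVec v⟩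

theorem trans : SameKOrbit u v → SameKOrbit v w → SameKOrbit u w := by
  rintro ⟨g, hg, rfl⟩ ⟨k, hk, rfl⟩
  exact ⟨k * g, Kgp.mul_mem hk hg, (mulVec_mulVec _ _ _).symm⟩

theorem symm : SameKOrbit v w → SameKOrbit w v := by
  rintro ⟨k, hk, rfl⟩
  refine ⟨_, Kgp.J5_mul_transpose_mul_J5_mem hk, ?_⟩
  rw [mulVec_mulVec, Kgp.J5_mul_transpose_mul_J5_mul hk, one_mulVec]

theorem smul (c : ℚ_[p]) : SameKOrbit v w → SameKOrbit (c • v) (c • w) := by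
  rintro ⟨k, hk, rfl⟩
  exact ⟨k, hk, mulVec_smul k c v⟩

theorem quadForm_eq : SameKOrbit v w → quadForm v = quadForm w := by
  rintro ⟨k, hk, rfl⟩
  exact (Kgp.quadForm_mulVec hk v).symm

theorem norm_le : SameKOrbit v w → ‖w‖ ≤ ‖v‖ := by
  rintro ⟨k, hk, rfl⟩
  exact norm_mulVec_le_of_forall_norm_le_one hk.2.2 v

theorem norm_eq (h : SameKOrbit v w) : ‖v‖ = ‖w‖ :=
  le_antisymm h.symm.norm_le h.norm_le

end SameKOrbit

def torus (a : ℚ_[p]) : Matrix (Fin 5) (Fin 5) ℚ_[p] := diagonal ![a, 1, 1, 1, a⁻¹]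

theorem torus_mulVec (a : ℚ_[p]) (v : Fin 5 → ℚ_[p]) :
    torus a *ᵥ v = ![a * v 0, v 1, v 2, v 3, a⁻¹ * v 4] := by
  ext i; fin_cases i <;> simp [torus, mulVec_diagonal]

theorem torus_mem_Kgp {a : ℚ_[p]} (ha : ‖a‖ = 1) : torus a ∈ Kgp p := by
  have ha0 : a ≠ 0 := norm_ne_zero_iff.1 (by rw [ha]; exact one_ne_zero)
  refine Kgp.mem_of_quadForm_mulVec ?_ (fun i j => ?_) fun v => ?_
  · simp [torus, Fin.prod_univ_five, ha0]
  · fin_cases i <;> fin_cases j <;> simp [torus, ha]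
  · simp only [quadForm_eq, torus_mulVec]
    simp only [cons_val_zero, cons_val_one, cons_val]
    field_simp

def unipotent (a b c : ℚ_[p]) : Matrix (Fin 5) (Fin 5) ℚ_[p] :=
  !![1, -c, -b, -a, -(a * c + b ^ 2 / 2);
     0, 1, 0, 0, a;
     0, 0, 1, 0, b;
     0, 0, 0, 1, c;
     0, 0, 0, 0, 1]

theorem unipotent_mulVec (a b c : ℚ_[p]) (v : Fin 5 → ℚ_[p]) :
    unipotent a b c *ᵥ v = ![v 0 - c * v 1 - b * v 2 - a * v 3 - (a * c + b ^ 2 / 2) * v 4,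
      v 1 + a * v 4, v 2 + b * v 4, v 3 + c * v 4, v 4] := by
  ext i
  fin_cases i <;> simp [unipotent, mulVec, dotProduct, Fin.sum_univ_five]
  ring

theorem unipotent_mem_Kgp (hp : p ≠ 2) {a b c : ℚ_[p]} (ha : ‖a‖ ≤ 1) (hb : ‖b‖ ≤ 1)
    (hc : ‖c‖ ≤ 1) : unipotent a b c ∈ Kgp p := by
  refine Kgp.mem_of_quadForm_mulVec ?_ (fun i j => ?_) fun v => ?_
  · have htri : (unipotent a b c).IsUpperTriangular := by
      intro i j hij
      fin_cases i <;> fin_cases j <;> first | rfl | exact absurd hij (by decide)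
    rw [det_of_isUpperTriangular htri]
    simp [unipotent, Fin.prod_univ_five]
  · have hcorner : ‖-(b ^ 2 / 2) + -(a * c)‖ ≤ 1 := by
      rw [← neg_add, norm_neg, add_comm]
      exact Padic.norm_mul_add_sq_div_two_le_one hp ha hb hc
    fin_cases i <;> fin_cases j <;> simp [unipotent, ha, hb, hc, hcorner]
  · simp only [quadForm_eq, unipotent_mulVec]
    simp only [cons_val_zero, cons_val_one, cons_val]
    ring

theorem lowerUnipotent_mem_Kgp (hp : p ≠ 2) {a b c : ℚ_[p]} (ha : ‖a‖ ≤ 1) (hb : ‖b‖ ≤ 1)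
    (hc : ‖c‖ ≤ 1) : J5 p * unipotent a b c * J5 p ∈ Kgp p :=
  Kgp.mul_mem (Kgp.mul_mem Kgp.J5_mem (unipotent_mem_Kgp hp ha hb hc)) Kgp.J5_mem

theorem lowerUnipotent_mulVec_four (a b c : ℚ_[p]) (v : Fin 5 → ℚ_[p]) :
    ((J5 p * unipotent a b c * J5 p) *ᵥ v) 4 =
      v 4 - c * v 3 - b * v 2 - a * v 1 - (a * c + b ^ 2 / 2) * v 0 := by
  simp [← mulVec_mulVec, J5_mulVec, unipotent_mulVec]

theorem eq_normalForm {z : Fin 5 → ℚ_[p]} (h1 : z 1 = 0) (h2 : z 2 = 0) (h3 : z 3 = 0)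
    (h4 : z 4 = 1) : z = ![quadForm z / 2, 0, 0, 0, 1] := by
  ext i; fin_cases i <;> simp [quadForm_eq, h1, h2, h3, h4]

theorem sameKOrbit_normalForm_of_norm_apply_four (hp : p ≠ 2) {y : Fin 5 → ℚ_[p]}
    (hy : ‖y‖ ≤ 1) (h4 : ‖y 4‖ = 1) : SameKOrbit y ![quadForm y / 2, 0, 0, 0, 1] := by
  have hy4 : y 4 ≠ 0 := norm_ne_zero_iff.1 (by rw [h4]; exact one_ne_zero)
  have hyi : ∀ i, ‖-y i‖ ≤ 1 := fun i =>
    (norm_neg (y i)).trans_le ((norm_le_pi_norm y i).trans hy)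
  have hrel := (SameKOrbit.of_mem (torus_mem_Kgp h4) y).trans
    (SameKOrbit.of_mem (unipotent_mem_Kgp hp (hyi 1) (hyi 2) (hyi 3)) _)
  rw [hrel.quadForm_eq]
  convert hrel using 1
  refine (eq_normalForm ?_ ?_ ?_ ?_).symm <;> simp [unipotent_mulVec, torus_mulVec, hy4]

theorem exists_sameKOrbit_norm_apply_four (hp : p ≠ 2) {y : Fin 5 → ℚ_[p]} (hy : ‖y‖ = 1) :
    ∃ z, SameKOrbit y z ∧ ‖z 4‖ = 1 := by
  by_cases h4 : ‖y 4‖ = 1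
  · exact ⟨y, .refl y, h4⟩
  by_cases h0 : ‖y 0‖ = 1
  · exact ⟨_, .of_mem Kgp.J5_mem y, by simpa [J5_mulVec] using h0⟩
  have hlt : ∀ i, ‖y i‖ ≠ 1 → ‖y i‖ < 1 := fun i hi =>
    lt_of_le_of_ne (hy ▸ norm_le_pi_norm y i) hi
  have hlower : ∀ a b c : ℚ_[p], ‖a‖ ≤ 1 → ‖b‖ ≤ 1 → ‖c‖ ≤ 1 →
      ‖a * y 1 + b * y 2 + c * y 3‖ = 1 → ∃ z, SameKOrbit y z ∧ ‖z 4‖ = 1 := by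
    intro a b c ha hb hc hunit
    have hsmall : ‖y 4 - (a * c + b ^ 2 / 2) * y 0‖ < 1 := by
      rw [sub_eq_add_neg]
      refine (IsUltrametricDist.norm_add_le_max _ _).trans_lt (max_lt (hlt 4 h4) ?_)
      rw [norm_neg, norm_mul]
      exact (mul_le_of_le_one_left (norm_nonneg _)
        (Padic.norm_mul_add_sq_div_two_le_one hp ha hb hc)).trans_lt (hlt 0 h0)
    refine ⟨_, .of_mem (lowerUnipotent_mem_Kgp hp (a := -a) (b := -b) (c := -c)
      (by rwa [norm_neg]) (by rwa [norm_neg]) (by rwa [norm_neg])) y, ?_⟩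
    rw [lowerUnipotent_mulVec_four, show y 4 - -c * y 3 - -b * y 2 - -a * y 1 -
      (-a * -c + (-b) ^ 2 / 2) * y 0 =
        (a * y 1 + b * y 2 + c * y 3) + (y 4 - (a * c + b ^ 2 / 2) * y 0) by ring]
    exact (IsUltrametricDist.norm_add_eq_left_of_norm_lt (hunit ▸ hsmall)).trans hunit
  obtain ⟨i, hi⟩ := ((pi_norm_eq_iff y 1).1 hy).2
  fin_cases i
  · exact absurd hi h0
  · exact hlower 1 0 0 (by simp) (by simp) (by simp) (by simpa using hi)
  · exact hlower 0 1 0 (by simp) (by simp) (by simp) (by simpa using hi)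
  · exact hlower 0 0 1 (by simp) (by simp) (by simp) (by simpa using hi)
  · exact absurd hi h4

theorem sameKOrbit_normalForm (hp : p ≠ 2) {y : Fin 5 → ℚ_[p]} (hy : ‖y‖ = 1) :
    SameKOrbit y ![quadForm y / 2, 0, 0, 0, 1] := by
  obtain ⟨z, hyz, hz⟩ := exists_sameKOrbit_norm_apply_four hp hy
  rw [hyz.quadForm_eq]
  exact hyz.trans (sameKOrbit_normalForm_of_norm_apply_four hp (hyz.norm_eq ▸ hy).le hz)

theorem sameKOrbit_iff (hp : p ≠ 2) {v w : Fin 5 → ℚ_[p]} (hv : v ≠ 0) :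
    SameKOrbit v w ↔ ‖v‖ = ‖w‖ ∧ quadForm v = quadForm w := by
  refine ⟨fun h => ⟨h.norm_eq, h.quadForm_eq⟩, fun ⟨hnorm, hQ⟩ => ?_⟩
  obtain ⟨i, hi : ‖v i‖ = ‖v‖⟩ := (IsGreatest.pi_norm v).1
  have hvi : v i ≠ 0 := norm_ne_zero_iff.1 (hi ▸ norm_ne_zero_iff.2 hv)
  have hprim : ∀ u : Fin 5 → ℚ_[p], ‖u‖ = ‖v‖ → ‖(v i)⁻¹ • u‖ = 1 := fun u hu => by
    rw [norm_smul, norm_inv, hu, ← hi, inv_mul_cancel₀ (norm_ne_zero_iff.2 hvi)]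
  have hv' := sameKOrbit_normalForm hp (hprim v rfl)
  have hw' := sameKOrbit_normalForm hp (hprim w hnorm.symm)
  rw [quadForm_smul, hQ, ← quadForm_smul] at hv'
  simpa [smul_smul, mul_inv_cancel₀ hvi] using (hv'.trans hw'.symm).smul (v i)

theorem exists_norm_eq_pow_of_quadForm_eq (hp : p ≠ 2) {θ : ℚ_[p]} (hθ : ‖θ‖ = 1)
    {x : Fin 5 → ℚ_[p]} (hx : quadForm x = 4 * θ) : ∃ r : ℕ, ‖x‖ = (p : ℝ) ^ r := by
  have hx1 : 1 ≤ ‖x‖ := by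
    have h := norm_quadForm_le x
    rw [hx, norm_mul, hθ, show (4 : ℚ_[p]) = 2 * 2 by norm_num, norm_mul,
      Padic.norm_two_eq_one hp] at h
    nlinarith [norm_nonneg x]
  obtain ⟨i, hi : ‖x i‖ = ‖x‖⟩ := (IsGreatest.pi_norm x).1
  have hxi : x i ≠ 0 := norm_ne_zero_iff.1 (by linarith)
  rw [← hi, Padic.norm_eq_zpow_neg_valuation hxi] at hx1 ⊢
  have hval : 0 ≤ -(x i).valuation :=
    (one_le_zpow_iff_right₀ (by exact_mod_cast (Fact.out : p.Prime).one_lt)).1 hx1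
  exact ⟨(-(x i).valuation).toNat, by rw [← zpow_natCast, Int.toNat_of_nonneg hval]⟩

theorem dmat_eq_torus (r : ℕ) : dmat p r = torus ((p : ℚ_[p]) ^ r) := rfl

theorem quadForm_dmat_mulVec (r : ℕ) (θ : ℚ_[p]) :
    quadForm (dmat p r *ᵥ ![2 * θ, 0, 0, 1, 1]) = 4 * θ := by
  have hc : (p : ℚ_[p]) ^ r ≠ 0 := pow_ne_zero _ (Nat.cast_ne_zero.2 (Fact.out : p.Prime).ne_zero)
  simp only [dmat_eq_torus, torus_mulVec, quadForm_eq]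
  simp only [cons_val_zero, cons_val_one, cons_val, mul_one, mul_zero, add_zero]
  field_simp
  ring

theorem norm_dmat_mulVec (r : ℕ) {θ : ℚ_[p]} (hθ : ‖θ‖ ≤ 1) :
    ‖dmat p r *ᵥ ![2 * θ, 0, 0, 1, 1]‖ = (p : ℝ) ^ r := by
  have hp1 : (1 : ℝ) ≤ p := by exact_mod_cast (Fact.out : p.Prime).one_lt.le
  have hc : ‖(p : ℚ_[p]) ^ r‖ ≤ 1 := by
    rw [Padic.norm_p_pow]
    exact zpow_le_one_of_nonpos₀ hp1 (by omega)
  have h0 : ‖(p : ℚ_[p]) ^ r * (2 * θ)‖ ≤ 1 := by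
    rw [norm_mul, norm_mul]
    exact mul_le_one₀ hc (by positivity) (mul_le_one₀ Padic.norm_two_le_one (norm_nonneg _) hθ)
  rw [pi_norm_eq_iff, dmat_eq_torus, torus_mulVec]
  refine ⟨fun i => ?_, 4, by simp⟩
  fin_cases i
  · exact h0.trans (one_le_pow₀ hp1)
  all_goals simp [one_le_pow₀ hp1]

end

theorem stmt_7 (hp : p ≠ 2) (θ : ℚ_[p]) (hθunit : ‖θ‖ = 1)
    (x : Fin 5 → ℚ_[p])
    (hx : 2 * x 0 * x 4 + 2 * x 1 * x 3 + (x 2) ^ 2 = 4 * θ) :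
    (∀ r : ℕ,
      (∃ k ∈ Kgp p, k.mulVec ((dmat p r).mulVec ![2*θ, 0, 0, 1, 1]) = x) ↔
      ((∀ i, ‖x i‖ ≤ (p : ℝ) ^ r) ∧ ∃ i, ‖x i‖ = (p : ℝ) ^ r))
    ∧ ∃! r : ℕ, ∃ k ∈ Kgp p, k.mulVec ((dmat p r).mulVec ![2*θ, 0, 0, 1, 1]) = x := by
  have hp0 : (p : ℝ) ≠ 0 := Nat.cast_ne_zero.2 (Fact.out : p.Prime).ne_zero
  have hQx : quadForm x = 4 * θ := (quadForm_eq x).trans hx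
  have horbit : ∀ r : ℕ,
      SameKOrbit (dmat p r *ᵥ ![2 * θ, 0, 0, 1, 1]) x ↔ ‖x‖ = (p : ℝ) ^ r := fun r => by
    have hnorm := norm_dmat_mulVec r hθunit.le
    have hne : dmat p r *ᵥ ![2 * θ, 0, 0, 1, 1] ≠ 0 :=
      norm_ne_zero_iff.1 (hnorm ▸ pow_ne_zero r hp0)
    rw [sameKOrbit_iff hp hne, hnorm, quadForm_dmat_mulVec, hQx, eq_comm]
    exact and_iff_left rfl
  refine ⟨fun r => (horbit r).trans (pi_norm_eq_iff x _), ?_⟩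
  obtain ⟨r, hr⟩ := exists_norm_eq_pow_of_quadForm_eq hp hθunit hQx
  refine ⟨r, (horbit r).2 hr, fun s hs => ?_⟩
  exact Nat.pow_right_injective (Fact.out : p.Prime).two_le
    (by exact_mod_cast ((horbit s).1 hs).symm.trans hr)

end
end

section
/- Let p be an odd prime, ψ an additive character of ℚ_p of conductor ℤ_p, r ≥ 0 an integer, and φ'_r as in the context. Let w = [[0,1],[−1,0]] and n(y) = [[1,y],[0,1]]. For α ∈ ℚ_pˣ put Ψ'(α) = Σ_{s∈ℤ} ∫_{‖a‖=p^s} φ'_r(w·n(α)·diag(a,1)) d^×a; for each α only finitely many summands are nonzero. Let χ : ℚ_pˣ → ℂˣ be an unramified multiplicative character with X = χ(p)⁻¹ and pX ≠ −1, and for l ∈ ℤ set S_l = (−1)^l·∫_{‖α‖=p^l} ψ(α)·χ(α)·‖α‖·Ψ'(α⁻¹) d^×α. Then only finitely many S_l are nonzero, and Σ_{l∈ℤ} S_l = (−1)^r·(pX)^{−r}·(1 − pX)/(1 + pX) + 2p²X(1 + X)/((p−1)(1 + pX)). -/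
/-!
By the Iwasawa decomposition of `w n(α) diag(a, 1)`, the integrand of `Ψ'(α)` is constant on each
shell `‖a‖ = p^s`: writing `‖α‖ = p^m`, it is `ψ(α⁻¹)` on the shell `s = 2m - r` when `m ≤ r`,
`1` on the shell `s = r` when `m < r`, and `0` elsewhere. Since `χ(α) = X^l` on `‖α‖ = p^l`, the
integrand of `S_l` is `X^l (ψ(2α)[-l ≤ r] + ψ(α)[-l < r])` there. For a unit `c`, the integral of
`ψ(cx)` over the ball `‖x‖ ≤ p^k` is its volume `p^k` if `k ≤ 0` and vanishes otherwise
(translating by a point where `ψ ≠ 1` multiplies it by that value), so over the shell `‖x‖ = p^l`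
it is `(1 - p⁻¹) p^l`, `-1` or `0` according as `l ≤ 0`, `l = 1` or `l ≥ 2`. Hence `S_l = 0`
unless `-r ≤ l ≤ 1`, `S_1 = 2pX/(p - 1)`, and the `S_{-j}` form two geometric series in
`(-pX)⁻¹`.
-/

open MeasureTheory Matrix

noncomputable section

variable (p : ℕ) [Fact p.Prime]

instance : MeasurableSpace ℚ_[p] := borel _
instance : BorelSpace ℚ_[p] := ⟨rfl⟩

open Metric

theorem integral_eq_zero_of_map_add_right {G 𝕜 : Type*} [MeasurableSpace G] [AddGroup G]
    [MeasurableAdd G] [RCLike 𝕜] {μ : Measure G} [μ.IsAddRightInvariant] {f : G → 𝕜}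
    {y : G} {c : 𝕜} (hc : c ≠ 1) (hf : ∀ x, f (x + y) = c * f x) : ∫ x, f x ∂μ = 0 := by
  have h := integral_add_right_eq_self (μ := μ) f y
  simp_rw [hf, integral_const_mul] at h
  by_contra h0
  exact hc (mul_eq_right₀ h0 |>.mp h)

section IteEq

variable {α M : Type*} [AddCommMonoid M] [DecidableEq α]

lemma Function.hasFiniteSupport_ite_eq (a : α) (u : M) :
    Function.HasFiniteSupport fun s ↦ if s = a then u else 0 :=
  (Set.finite_singleton a).subset <| Function.support_subset_iff'.mpr fun _ hs ↦ if_neg hs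

lemma finsum_ite_eq (a : α) (u : M) : ∑ᶠ s, (if s = a then u else 0) = u :=
  (finsum_eq_single _ a fun _ hs ↦ if_neg hs).trans (if_pos rfl)

end IteEq

section FourierShellTerm

variable (q X : ℂ) (r : ℕ)

/-- The closed form of `S_l`; its last factor is `(1 - q⁻¹)⁻¹ ∫_{‖x‖ = q^l} ψ(x) dx` for `q = p`. -/
def fourierShellTerm (l : ℤ) : ℂ :=
  (-1) ^ l * X ^ l * ((if -l ≤ r then 1 else 0) + (if -l < r then 1 else 0)) *
    if l ≤ 0 then q ^ l else if l = 1 then -q / (q - 1) else 0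

lemma fourierShellTerm_one : fourierShellTerm q X r 1 = 2 * q * X / (q - 1) := by
  simp only [fourierShellTerm, if_pos (show -1 ≤ (r : ℤ) by omega),
    if_pos (show -1 < (r : ℤ) by omega)]
  norm_num
  ring

lemma fourierShellTerm_neg_natCast {j : ℕ} (hj : j ≤ r) :
    fourierShellTerm q X r (-j) = (if j < r then 2 else 1) * (-(q * X))⁻¹ ^ j := by
  have hw : (-1) ^ (-(j : ℤ)) * X ^ (-(j : ℤ)) * q ^ (-(j : ℤ)) = (-(q * X))⁻¹ ^ j := by
    rw [← mul_zpow, ← mul_zpow, _root_.zpow_neg, zpow_natCast, inv_pow]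
    ring_nf
  simp only [fourierShellTerm, neg_neg, Nat.cast_le, Nat.cast_lt, if_pos hj,
    if_pos (show -(j : ℤ) ≤ 0 by omega), ← hw]
  split_ifs <;> ring

lemma support_fourierShellTerm_subset :
    Function.support (fourierShellTerm q X r) ⊆
      ↑(insert (1 : ℤ) ((Finset.range (r + 1)).image fun j : ℕ ↦ -(j : ℤ))) := by
  refine Function.support_subset_iff'.mpr fun l hl ↦ ?_
  simp only [Finset.coe_insert, Finset.coe_image, Finset.coe_range, Set.mem_insert_iff,
    Set.mem_image, Set.mem_Iio, not_or, not_exists, not_and] at hl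
  have := hl.2 (-l).toNat
  simp only [fourierShellTerm]
  split_ifs <;> first | omega | simp

lemma finsum_fourierShellTerm (hq0 : q ≠ 0) (hq1 : q ≠ 1) (hX : X ≠ 0) (hqX : q * X ≠ -1) :
    ∑ᶠ l, fourierShellTerm q X r l =
      (-1) ^ r * (q * X) ^ (-(r : ℤ)) * ((1 - q * X) / (1 + q * X)) +
        2 * q ^ 2 * X * (1 + X) / ((q - 1) * (1 + q * X)) := by
  set w := (-(q * X))⁻¹
  have hw1 : w ≠ 1 := fun h ↦ hqX (neg_eq_iff_eq_neg.mp (inv_eq_one.mp h))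
  have hwr : w ^ r = (-1) ^ r * (q * X) ^ (-(r : ℤ)) := by
    rw [inv_pow, neg_pow, mul_inv, _root_.zpow_neg, zpow_natCast, ← inv_pow, inv_neg_one]
  have h1 : (1 : ℤ) ∉ (Finset.range (r + 1)).image fun j : ℕ ↦ -(j : ℤ) := by
    simp only [Finset.mem_image, not_exists, not_and]
    omega
  rw [finsum_eq_sum_of_support_subset _ (support_fourierShellTerm_subset q X r),
    Finset.sum_insert h1, Finset.sum_image fun _ _ _ _ h ↦ Nat.cast_injective (neg_injective h),
    fourierShellTerm_one,
    Finset.sum_congr rfl fun j hj ↦ fourierShellTerm_neg_natCast q X r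
      (Nat.lt_succ_iff.mp (Finset.mem_range.mp hj)),
    Finset.sum_range_succ, if_neg (lt_irrefl r),
    Finset.sum_congr rfl fun j hj ↦ by rw [if_pos (Finset.mem_range.mp hj)],
    ← Finset.mul_sum, geom_sum_eq hw1, ← hwr]
  have hqX' : 1 + q * X ≠ 0 := fun h ↦ hqX (by linear_combination h)
  have hq1' : q - 1 ≠ 0 := sub_ne_zero.mpr hq1
  have hw1' : w - 1 ≠ 0 := sub_ne_zero.mpr hw1
  simp only [w] at hw1' ⊢
  field_simp
  ring

end FourierShellTerm

namespace Padic

variable {p}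

lemma one_lt_natCast_prime : 1 < (p : ℝ) := mod_cast (Fact.out : p.Prime).one_lt

lemma natCast_prime_pos : 0 < (p : ℝ) := one_pos.trans one_lt_natCast_prime

lemma norm_two_eq_one_s16 (hp2 : p ≠ 2) : ‖(2 : ℚ_[p])‖ = 1 := by
  simpa using norm_natCast_eq_one_iff.mpr ((Nat.coprime_primes Fact.out Nat.prime_two).mpr hp2)

lemma setOf_norm_eq_zpow_eq_closedBall_diff (k : ℤ) :
    {x : ℚ_[p] | ‖x‖ = (p : ℝ) ^ k} =
      closedBall 0 ((p : ℝ) ^ k) \ closedBall 0 ((p : ℝ) ^ (k - 1)) := by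
  ext x
  simp only [Set.mem_ofPred_eq, Set.mem_sdiff, mem_closedBall_zero_iff,
    ← norm_lt_pow_iff_norm_le_pow_sub_one, not_lt, le_antisymm_iff]

lemma norm_natCast_sub_natCast {i j : ℕ} (hi : i < p) (hj : j < p) (hij : i ≠ j) :
    ‖(i - j : ℚ_[p])‖ = 1 := by
  have hndvd : ¬ (p : ℤ) ∣ (i - j : ℤ) := fun h ↦
    hij (by have := Int.eq_zero_of_abs_lt_dvd h (by rw [abs_lt]; omega); omega)
  rw [← norm_intCast_lt_one_iff, not_lt] at hndvd
  exact_mod_cast le_antisymm (norm_int_le_one _) hndvd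

lemma closedBall_zpow_add_one_eq_biUnion (k : ℤ) :
    closedBall (0 : ℚ_[p]) ((p : ℝ) ^ (k + 1)) =
      ⋃ i ∈ Finset.range p, closedBall ((i : ℚ_[p]) * p ^ (-(k + 1))) ((p : ℝ) ^ k) := by
  have hp : (p : ℚ_[p]) ≠ 0 := mod_cast (Fact.out : p.Prime).ne_zero
  have ht : ‖(p : ℚ_[p]) ^ (-(k + 1))‖ = (p : ℝ) ^ (k + 1) := by rw [norm_p_zpow, neg_neg]
  ext x
  simp only [Set.mem_iUnion, Finset.mem_range, exists_prop, mem_closedBall_zero_iff]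
  constructor
  · intro hx
    have hy : ‖x * p ^ (k + 1)‖ ≤ 1 := by
      rw [norm_mul, norm_p_zpow]
      refine (mul_le_mul_of_nonneg_right hx (by positivity)).trans_eq ?_
      rw [← zpow_add₀ natCast_prime_pos.ne', add_neg_cancel, zpow_zero]
    obtain ⟨n, hn, hxn⟩ := PadicInt.exists_mem_range ⟨_, hy⟩
    rw [IsLocalRing.mem_maximalIdeal, PadicInt.mem_nonunits, PadicInt.norm_def] at hxn
    change ‖x * p ^ (k + 1) - n‖ < 1 at hxn
    refine ⟨n, hn, ?_⟩
    have hx' : x - n * p ^ (-(k + 1)) = (x * p ^ (k + 1) - n) * p ^ (-(k + 1)) := by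
      rw [sub_mul, mul_assoc, ← zpow_add₀ hp, add_neg_cancel, zpow_zero, mul_one]
    have := (norm_lt_pow_iff_norm_le_pow_sub_one (p := p) (x - n * p ^ (-(k + 1))) (k + 1)).mp
      (by rw [hx', norm_mul, ht]; exact mul_lt_of_lt_one_left (zpow_pos natCast_prime_pos _) hxn)
    simpa only [add_sub_cancel_right, mem_closedBall, dist_eq_norm] using this
  · rintro ⟨i, -, hx⟩
    have hi : (i : ℚ_[p]) * p ^ (-(k + 1)) ∈ closedBall 0 ((p : ℝ) ^ (k + 1)) := by
      rw [mem_closedBall_zero_iff, norm_mul, ht]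
      exact mul_le_of_le_one_left (by positivity) (IsUltrametricDist.norm_natCast_le_one _ i)
    rw [← mem_closedBall_zero_iff, IsUltrametricDist.closedBall_eq_of_mem hi]
    exact closedBall_subset_closedBall
      (zpow_le_zpow_right₀ one_lt_natCast_prime.le (by omega)) hx

lemma pairwiseDisjoint_closedBall_zpow (k : ℤ) :
    (Finset.range p : Set ℕ).PairwiseDisjoint
      fun i ↦ closedBall ((i : ℚ_[p]) * p ^ (-(k + 1))) ((p : ℝ) ^ k) := by
  intro i hi j hj hij
  refine (IsUltrametricDist.closedBall_eq_or_disjoint _ _ _).resolve_left fun h ↦ ?_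
  have := h ▸ mem_closedBall_self (zpow_pos natCast_prime_pos k).le
  rw [mem_closedBall, dist_eq_norm, ← sub_mul, norm_mul, norm_p_zpow, neg_neg,
    norm_natCast_sub_natCast (by simpa using hi) (by simpa using hj) hij, one_mul] at this
  exact absurd this (not_le.mpr (zpow_lt_zpow_right₀ one_lt_natCast_prime (by omega)))

variable (μ : Measure ℚ_[p])

lemma measure_closedBall_zpow_add_one [μ.IsAddHaarMeasure] (k : ℤ) :
    μ (closedBall 0 ((p : ℝ) ^ (k + 1))) = p * μ (closedBall 0 ((p : ℝ) ^ k)) := by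
  rw [closedBall_zpow_add_one_eq_biUnion,
    measure_biUnion_finset (pairwiseDisjoint_closedBall_zpow k) fun _ _ ↦ measurableSet_closedBall]
  simp [Measure.addHaar_closedBall_center]

lemma measureReal_closedBall_zpow [μ.IsAddHaarMeasure] (hμ : μ {x | ‖x‖ ≤ 1} = 1) (k : ℤ) :
    μ.real (closedBall 0 ((p : ℝ) ^ k)) = (p : ℝ) ^ k := by
  have step (k : ℤ) : μ.real (closedBall 0 ((p : ℝ) ^ (k + 1))) =
      p * μ.real (closedBall 0 ((p : ℝ) ^ k)) := by
    simp only [measureReal_def, measure_closedBall_zpow_add_one, ENNReal.toReal_mul,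
      ENNReal.toReal_natCast]
  induction k using Int.induction_on with
  | zero => simp [measureReal_def, closedBall, dist_eq_norm, hμ]
  | succ k ih => rw [step, ih, zpow_add_one₀ natCast_prime_pos.ne', mul_comm]
  | pred k ih =>
    have hp := (natCast_prime_pos (p := p)).ne'
    rw [← mul_right_inj' hp, ← step, sub_add_cancel, ih, zpow_sub_one₀ hp]
    field_simp

lemma measureReal_setOf_norm_eq_zpow [μ.IsAddHaarMeasure] (hμ : μ {x | ‖x‖ ≤ 1} = 1) (k : ℤ) :
    μ.real {x | ‖x‖ = (p : ℝ) ^ k} = (1 - (p : ℝ)⁻¹) * (p : ℝ) ^ k := by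
  rw [setOf_norm_eq_zpow_eq_closedBall_diff, measureReal_sdiff
      (closedBall_subset_closedBall (zpow_le_zpow_right₀ one_lt_natCast_prime.le (by omega)))
      measurableSet_closedBall measure_closedBall_lt_top.ne, measureReal_closedBall_zpow μ hμ,
    measureReal_closedBall_zpow μ hμ, zpow_sub_one₀ natCast_prime_pos.ne']
  ring

/-- An additive character of `ℚ_[p]` of conductor `ℤ_[p]`. -/
structure IsUnramifiedAddChar (ψ : ℚ_[p] → ℂ) : Prop where
  map_add_eq_mul : ∀ x y, ψ (x + y) = ψ x * ψ y
  map_eq_one_of_norm_le_one : ∀ x : ℚ_[p], ‖x‖ ≤ 1 → ψ x = 1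
  exists_norm_eq_ne_one : ∃ x : ℚ_[p], ‖x‖ = p ∧ ψ x ≠ 1

namespace IsUnramifiedAddChar

variable {ψ : ℚ_[p] → ℂ}

lemma continuous (hψ : IsUnramifiedAddChar ψ) : Continuous ψ :=
  continuous_iff_continuousAt.mpr fun x ↦ Filter.EventuallyEq.continuousAt (y := ψ x) <| by
    filter_upwards [closedBall_mem_nhds x one_pos] with y hy
    conv_lhs => rw [← add_sub_cancel x y]
    rw [hψ.map_add_eq_mul, hψ.map_eq_one_of_norm_le_one (y - x)
      (by rwa [mem_closedBall, dist_eq_norm] at hy), mul_one]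

lemma comp_mul (hψ : IsUnramifiedAddChar ψ) {c : ℚ_[p]} (hc : ‖c‖ = 1) :
    IsUnramifiedAddChar fun x ↦ ψ (c * x) where
  map_add_eq_mul x y := by rw [mul_add, hψ.map_add_eq_mul]
  map_eq_one_of_norm_le_one x hx := hψ.map_eq_one_of_norm_le_one _ (by rwa [norm_mul, hc, one_mul])
  exists_norm_eq_ne_one := by
    obtain ⟨x, hx, hψx⟩ := hψ.exists_norm_eq_ne_one
    have hc0 : c ≠ 0 := norm_ne_zero_iff.mp (hc ▸ one_ne_zero)
    exact ⟨c⁻¹ * x, by rw [norm_mul, norm_inv, hc, inv_one, one_mul, hx],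
      by rwa [mul_inv_cancel_left₀ hc0]⟩

lemma integral_closedBall_zpow (hψ : IsUnramifiedAddChar ψ) [μ.IsAddHaarMeasure]
    (hμ : μ {x | ‖x‖ ≤ 1} = 1) (k : ℤ) :
    ∫ x in closedBall 0 ((p : ℝ) ^ k), ψ x ∂μ = if k ≤ 0 then (p : ℂ) ^ k else 0 := by
  split_ifs with hk
  · have h1 : Set.EqOn ψ 1 (closedBall 0 ((p : ℝ) ^ k)) := fun x hx ↦
      hψ.map_eq_one_of_norm_le_one x ((mem_closedBall_zero_iff.mp hx).trans
        (zpow_le_one_of_nonpos₀ one_lt_natCast_prime.le hk))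
    rw [setIntegral_congr_fun measurableSet_closedBall h1]
    simp [measureReal_closedBall_zpow μ hμ]
  · obtain ⟨y, hy, hψy⟩ := hψ.exists_norm_eq_ne_one
    have hr : (0 : ℝ) < (p : ℝ) ^ k := zpow_pos natCast_prime_pos k
    let B := IsUltrametricDist.closedBall_openAddSubgroup ℚ_[p] hr
    have hyB : y ∈ B := by
      show ‖y - 0‖ ≤ _
      rw [sub_zero, hy]
      simpa using zpow_le_zpow_right₀ one_lt_natCast_prime.le (show (1 : ℤ) ≤ k by omega)
    have hmem (x : ℚ_[p]) : x + y ∈ closedBall 0 ((p : ℝ) ^ k) ↔ x ∈ closedBall 0 ((p : ℝ) ^ k) :=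
      B.add_mem_cancel_right hyB
    rw [← integral_indicator measurableSet_closedBall]
    refine integral_eq_zero_of_map_add_right (y := y) hψy fun x ↦ ?_
    by_cases hx : x ∈ closedBall 0 ((p : ℝ) ^ k)
    · rw [Set.indicator_of_mem ((hmem x).mpr hx), Set.indicator_of_mem hx, hψ.map_add_eq_mul,
        mul_comm]
    · rw [Set.indicator_of_notMem (mt (hmem x).mp hx), Set.indicator_of_notMem hx, mul_zero]

lemma integrableOn_setOf_norm_eq (hψ : IsUnramifiedAddChar ψ) [IsFiniteMeasureOnCompacts μ]
    (r : ℝ) : IntegrableOn ψ {x | ‖x‖ = r} μ :=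
  hψ.continuous.continuousOn.integrableOn_compact
    (by simpa only [← mem_sphere_zero_iff_norm, Set.ofPred_mem_eq] using isCompact_sphere 0 r)

lemma integral_setOf_norm_eq_zpow (hψ : IsUnramifiedAddChar ψ) [μ.IsAddHaarMeasure]
    (hμ : μ {x | ‖x‖ ≤ 1} = 1) (k : ℤ) : ∫ x in {x | ‖x‖ = (p : ℝ) ^ k}, ψ x ∂μ =
      if k ≤ 0 then (1 - (p : ℂ)⁻¹) * (p : ℂ) ^ k else if k = 1 then -1 else 0 := by
  rw [setOf_norm_eq_zpow_eq_closedBall_diff, setIntegral_sdiff measurableSet_closedBall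
      (hψ.continuous.continuousOn.integrableOn_compact (isCompact_closedBall _ _))
      (closedBall_subset_closedBall (zpow_le_zpow_right₀ one_lt_natCast_prime.le (by omega))),
    hψ.integral_closedBall_zpow μ hμ, hψ.integral_closedBall_zpow μ hμ]
  have hp : (p : ℂ) ≠ 0 := mod_cast (Fact.out : p.Prime).ne_zero
  split_ifs <;> first | omega | simp_all [zpow_sub_one₀ hp] <;> ring

end IsUnramifiedAddChar

/-- `∫_{‖a‖ = p^k} f(a) d^×a`, where `d^×a = (1 - p⁻¹)⁻¹ ‖a‖⁻¹ da`. -/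
def shellMulIntegral (μ : Measure ℚ_[p]) (k : ℤ) (f : ℚ_[p] → ℂ) : ℂ :=
  (1 - 1 / (p : ℝ))⁻¹ • ∫ a in {a : ℚ_[p] | ‖a‖ = (p : ℝ) ^ k}, (‖a‖ : ℂ)⁻¹ * f a ∂μ

lemma shellMulIntegral_eq_mul_integral {k : ℤ} {f g : ℚ_[p] → ℂ}
    (hfg : ∀ a : ℚ_[p], ‖a‖ = (p : ℝ) ^ k → f a = ‖a‖ * g a) :
    shellMulIntegral μ k f = (1 - (p : ℂ)⁻¹)⁻¹ * ∫ a in {a | ‖a‖ = (p : ℝ) ^ k}, g a ∂μ := by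
  have hg : Set.EqOn (fun a : ℚ_[p] ↦ (‖a‖ : ℂ)⁻¹ * f a) g {a | ‖a‖ = (p : ℝ) ^ k} :=
    fun a ha ↦ by
      have : (‖a‖ : ℂ) ≠ 0 := by rw [ha]; exact_mod_cast (zpow_pos natCast_prime_pos k).ne'
      simp only [hfg a ha, inv_mul_cancel_left₀ this]
  rw [shellMulIntegral,
    setIntegral_congr_fun (measurableSet_eq_fun measurable_norm measurable_const) hg,
    Complex.real_smul]
  push_cast
  ring

lemma shellMulIntegral_eq_of_eqOn [μ.IsAddHaarMeasure] (hμ : μ {x | ‖x‖ ≤ 1} = 1) {k : ℤ}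
    {f : ℚ_[p] → ℂ} {c : ℂ} (hf : ∀ a : ℚ_[p], ‖a‖ = (p : ℝ) ^ k → f a = c) :
    shellMulIntegral μ k f = c := by
  have hc : Set.EqOn (fun a : ℚ_[p] ↦ (‖a‖ : ℂ)⁻¹ * f a) (fun _ ↦ ((p : ℂ) ^ k)⁻¹ * c)
      {a | ‖a‖ = (p : ℝ) ^ k} := fun a ha ↦ by simp [hf a ha, show ‖a‖ = (p : ℝ) ^ k from ha]
  have hp : (p : ℂ) ≠ 0 := mod_cast (Fact.out : p.Prime).ne_zero
  have hp1 : (p : ℂ) - 1 ≠ 0 := sub_ne_zero.mpr (mod_cast (Fact.out : p.Prime).ne_one)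
  rw [shellMulIntegral,
    setIntegral_congr_fun (measurableSet_eq_fun measurable_norm measurable_const) hc,
    setIntegral_const, measureReal_setOf_norm_eq_zpow μ hμ, Complex.real_smul, Complex.real_smul]
  push_cast
  field_simp

structure IsUnramifiedMulChar (χ : ℚ_[p] → ℂ) : Prop where
  map_mul : ∀ a b : ℚ_[p], a ≠ 0 → b ≠ 0 → χ (a * b) = χ a * χ b
  map_eq_one_of_norm_eq_one : ∀ u : ℚ_[p], ‖u‖ = 1 → χ u = 1

namespace IsUnramifiedMulChar

variable {χ : ℚ_[p] → ℂ}

lemma map_natCast_prime_ne_zero (hχ : IsUnramifiedMulChar χ) : χ p ≠ 0 := by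
  have hp : (p : ℚ_[p]) ≠ 0 := mod_cast (Fact.out : p.Prime).ne_zero
  intro h
  have := hχ.map_mul _ _ hp (inv_ne_zero hp)
  rw [mul_inv_cancel₀ hp, hχ.map_eq_one_of_norm_eq_one 1 norm_one, h, zero_mul] at this
  exact one_ne_zero this

lemma map_eq_zpow_of_norm_eq (hχ : IsUnramifiedMulChar χ) {α : ℚ_[p]} {l : ℤ}
    (hα : ‖α‖ = (p : ℝ) ^ l) : χ α = χ p ^ (-l) := by
  have hp : (p : ℚ_[p]) ≠ 0 := mod_cast (Fact.out : p.Prime).ne_zero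
  have hχp := hχ.map_natCast_prime_ne_zero
  set u := (p : ℚ_[p]) ^ l * α
  have hu : ‖u‖ = 1 := by
    rw [norm_mul, norm_p_zpow, hα, ← zpow_add₀ natCast_prime_pos.ne', neg_add_cancel, zpow_zero]
  have hu0 : u ≠ 0 := norm_ne_zero_iff.mp (hu ▸ one_ne_zero)
  have step (n : ℤ) : χ (p ^ (n + 1) * u) = χ p * χ (p ^ n * u) := by
    rw [zpow_add_one₀ hp, mul_comm _ (p : ℚ_[p]), mul_assoc,
      hχ.map_mul _ _ hp (mul_ne_zero (zpow_ne_zero n hp) hu0)]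
  have key (n : ℤ) : χ (p ^ n * u) = χ p ^ n := by
    induction n using Int.induction_on with
    | zero => simp [hχ.map_eq_one_of_norm_eq_one u hu]
    | succ n ih => rw [step, ih, zpow_add_one₀ hχp, mul_comm]
    | pred n ih =>
      rw [← sub_add_cancel (-(n : ℤ)) 1, step, zpow_add_one₀ hχp, mul_comm _ (χ p)] at ih
      exact mul_left_cancel₀ hχp ih
  rw [← key, ← mul_assoc, ← zpow_add₀ hp, neg_add_cancel, zpow_zero, one_mul]

end IsUnramifiedMulChar

/-- The conditions characterising the function `φ'_r` on `GL₂(ℚ_p)`. -/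
structure IsSphericalWhittaker (ψ : ℚ_[p] → ℂ) (r : ℕ) (φ : Matrix (Fin 2) (Fin 2) ℚ_[p] → ℂ) :
    Prop where
  map_unipotent_mul : ∀ (x : ℚ_[p]) (g : Matrix (Fin 2) (Fin 2) ℚ_[p]),
    φ (!![1, x; 0, 1] * g) = ψ (-x) * φ g
  map_mul_of_integral : ∀ g k : Matrix (Fin 2) (Fin 2) ℚ_[p],
    (∀ i j, ‖k i j‖ ≤ 1) → ‖k.det‖ = 1 → φ (g * k) = φ g
  map_smul_one_mul : ∀ (c : ℚ_[p]) (g : Matrix (Fin 2) (Fin 2) ℚ_[p]), c ≠ 0 →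
    φ ((c • (1 : Matrix (Fin 2) (Fin 2) ℚ_[p])) * g) = φ g
  map_diag : ∀ α : ℚ_[p], φ !![α, 0; 0, 1] = if ‖α‖ = (p : ℝ) ^ (-(r : ℤ)) then 1 else 0

/-- The orbital integral `Ψ'(α, φ)`. -/
def orbitalIntegral (μ : Measure ℚ_[p]) (φ : Matrix (Fin 2) (Fin 2) ℚ_[p] → ℂ) (α : ℚ_[p]) : ℂ :=
  ∑ᶠ s : ℤ, shellMulIntegral μ s fun a ↦ φ (!![0, 1; -1, 0] * !![1, α; 0, 1] * !![a, 0; 0, 1])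

namespace IsSphericalWhittaker

variable {ψ : ℚ_[p] → ℂ} {r : ℕ} {φ : Matrix (Fin 2) (Fin 2) ℚ_[p] → ℂ} [μ.IsAddHaarMeasure]

lemma apply_smul_one_mul_diag_mul (hφ : IsSphericalWhittaker ψ r φ) {c : ℚ_[p]} (hc : c ≠ 0)
    (d : ℚ_[p]) {k : Matrix (Fin 2) (Fin 2) ℚ_[p]} (hk : ∀ i j, ‖k i j‖ ≤ 1)
    (hdet : ‖k.det‖ = 1) :
    φ (c • 1 * !![d, 0; 0, 1] * k) = if ‖d‖ = (p : ℝ) ^ (-(r : ℤ)) then 1 else 0 := by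
  rw [hφ.map_mul_of_integral _ _ hk hdet, hφ.map_smul_one_mul _ _ hc, hφ.map_diag]

/-- Iwasawa decomposition of `w n(α) diag(a, 1)`, split at `‖a‖ = ‖α‖`. -/
lemma apply_w_mul_unipotent_mul_diag (hφ : IsSphericalWhittaker ψ r φ) {a α : ℚ_[p]} {s m : ℤ}
    (ha : ‖a‖ = (p : ℝ) ^ s) (hα : ‖α‖ = (p : ℝ) ^ m) :
    φ (!![0, 1; -1, 0] * !![1, α; 0, 1] * !![a, 0; 0, 1]) =
      (if s = 2 * m - r then if m ≤ r then ψ α⁻¹ else 0 else 0) +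
        (if s = r then if m < r then 1 else 0 else 0) := by
  have hp := (natCast_prime_pos (p := p))
  have ha0 : a ≠ 0 := norm_ne_zero_iff.mp (ha ▸ (zpow_pos hp s).ne')
  have hα0 : α ≠ 0 := norm_ne_zero_iff.mp (hα ▸ (zpow_pos hp m).ne')
  have hzpow_inj {i j : ℤ} : (p : ℝ) ^ i = (p : ℝ) ^ j ↔ i = j :=
    zpow_right_inj₀ hp one_lt_natCast_prime.ne'
  rcases le_or_gt s m with hsm | hms
  · have hM : !![0, 1; -1, 0] * !![1, α; 0, 1] * !![a, 0; 0, 1] =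
        !![1, -α⁻¹; 0, 1] * ((-α) • 1 * !![a / α ^ 2, 0; 0, 1] * !![1, 0; a / α, 1]) := by
      ext i j
      fin_cases i <;> fin_cases j <;> simp [Matrix.mul_apply, Fin.sum_univ_two]
      all_goals field_simp
      ring
    have hle : ‖a‖ / ‖α‖ ≤ 1 := by
      rw [ha, hα, div_le_one (zpow_pos hp m)]
      exact zpow_le_zpow_right₀ one_lt_natCast_prime.le hsm
    rw [hM, hφ.map_unipotent_mul, neg_neg, hφ.apply_smul_one_mul_diag_mul (neg_ne_zero.mpr hα0)
      _ (by intro i j; fin_cases i <;> fin_cases j <;> simp [hle])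
      (by simp [Matrix.det_fin_two_of]),
      norm_div, norm_pow, ha, hα, ← zpow_natCast, ← _root_.zpow_mul, ← zpow_sub₀ hp.ne']
    simp only [hzpow_inj]
    split_ifs <;> first | rfl | omega | simp
  · have hM : !![0, 1; -1, 0] * !![1, α; 0, 1] * !![a, 0; 0, 1] =
        (-a) • 1 * !![a⁻¹, 0; 0, 1] * !![0, -1; 1, α / a] := by
      ext i j; fin_cases i <;> fin_cases j <;> simp [Matrix.mul_apply, Fin.sum_univ_two] <;>
        field_simp
    have hlt : ‖α‖ / ‖a‖ ≤ 1 := by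
      rw [ha, hα, div_le_one (zpow_pos hp s)]
      exact zpow_le_zpow_right₀ one_lt_natCast_prime.le hms.le
    rw [hM, hφ.apply_smul_one_mul_diag_mul (neg_ne_zero.mpr ha0)
      _ (by intro i j; fin_cases i <;> fin_cases j <;> simp [hlt])
      (by simp [Matrix.det_fin_two_of]),
      norm_inv, ha, ← _root_.zpow_neg]
    simp only [hzpow_inj]
    split_ifs <;> first | rfl | omega | simp

lemma shellMulIntegral_eq (hφ : IsSphericalWhittaker ψ r φ) (hμ : μ {x | ‖x‖ ≤ 1} = 1)
    {α : ℚ_[p]} {m : ℤ} (hα : ‖α‖ = (p : ℝ) ^ m) (s : ℤ) :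
    shellMulIntegral μ s (fun a ↦ φ (!![0, 1; -1, 0] * !![1, α; 0, 1] * !![a, 0; 0, 1])) =
      (if s = 2 * m - r then if m ≤ r then ψ α⁻¹ else 0 else 0) +
        (if s = r then if m < r then 1 else 0 else 0) :=
  shellMulIntegral_eq_of_eqOn μ hμ fun _ ha ↦ hφ.apply_w_mul_unipotent_mul_diag ha hα

lemma hasFiniteSupport_shellMulIntegral (hφ : IsSphericalWhittaker ψ r φ)
    (hμ : μ {x | ‖x‖ ≤ 1} = 1) {α : ℚ_[p]} (hα : α ≠ 0) :
    Function.HasFiniteSupport fun s : ℤ ↦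
      shellMulIntegral μ s (fun a ↦ φ (!![0, 1; -1, 0] * !![1, α; 0, 1] * !![a, 0; 0, 1])) := by
  simp_rw [hφ.shellMulIntegral_eq μ hμ (norm_eq_zpow_neg_valuation hα)]
  exact (Function.hasFiniteSupport_ite_eq _ _).add (Function.hasFiniteSupport_ite_eq _ _)

lemma orbitalIntegral_eq (hφ : IsSphericalWhittaker ψ r φ) (hμ : μ {x | ‖x‖ ≤ 1} = 1)
    {α : ℚ_[p]} {m : ℤ} (hα : ‖α‖ = (p : ℝ) ^ m) :
    orbitalIntegral μ φ α = (if m ≤ r then ψ α⁻¹ else 0) + (if m < r then 1 else 0) := by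
  rw [orbitalIntegral, funext (hφ.shellMulIntegral_eq μ hμ hα),
    finsum_add_distrib (Function.hasFiniteSupport_ite_eq _ _)
      (Function.hasFiniteSupport_ite_eq _ _), finsum_ite_eq, finsum_ite_eq]

end IsSphericalWhittaker

lemma neg_one_zpow_mul_shellMulIntegral_eq_fourierShellTerm [μ.IsAddHaarMeasure]
    (hμ : μ {x | ‖x‖ ≤ 1} = 1) (hp2 : p ≠ 2) {ψ : ℚ_[p] → ℂ} (hψ : IsUnramifiedAddChar ψ)
    {r : ℕ} {φ : Matrix (Fin 2) (Fin 2) ℚ_[p] → ℂ} (hφ : IsSphericalWhittaker ψ r φ)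
    {χ : ℚ_[p] → ℂ} (hχ : IsUnramifiedMulChar χ) (l : ℤ) :
    (-1) ^ l * shellMulIntegral μ l (fun α ↦ ψ α * χ α * ‖α‖ * orbitalIntegral μ φ α⁻¹) =
      fourierShellTerm p (χ p)⁻¹ r l := by
  set m₁ : ℂ := if -l ≤ r then 1 else 0
  set m₂ : ℂ := if -l < r then 1 else 0
  have hf (α : ℚ_[p]) (hα : ‖α‖ = (p : ℝ) ^ l) :
      ψ α * χ α * ‖α‖ * orbitalIntegral μ φ α⁻¹ =
        ‖α‖ * ((χ p)⁻¹ ^ l * (m₁ * ψ (2 * α) + m₂ * ψ α)) := by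
    rw [hφ.orbitalIntegral_eq μ hμ (by rw [norm_inv, hα, _root_.zpow_neg]), inv_inv,
      hχ.map_eq_zpow_of_norm_eq hα, _root_.inv_zpow', two_mul, hψ.map_add_eq_mul]
    simp only [m₁, m₂]
    split_ifs <;> ring
  have hψ2 := hψ.comp_mul (norm_two_eq_one_s16 hp2)
  rw [shellMulIntegral_eq_mul_integral μ hf, integral_const_mul,
    integral_add ((hψ2.integrableOn_setOf_norm_eq μ _).const_mul m₁)
      ((hψ.integrableOn_setOf_norm_eq μ _).const_mul m₂), integral_const_mul,
    integral_const_mul, hψ2.integral_setOf_norm_eq_zpow μ hμ, hψ.integral_setOf_norm_eq_zpow μ hμ]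
  have hp0 : (p : ℂ) ≠ 0 := mod_cast (Fact.out : p.Prime).ne_zero
  have hp1 : (p : ℂ) - 1 ≠ 0 := sub_ne_zero.mpr (mod_cast (Fact.out : p.Prime).ne_one)
  simp only [fourierShellTerm, m₁, m₂]
  split_ifs <;> field_simp <;> ring

end Padic

/-- Proposition 3.2, non-split case: the Fourier transform
`Σ_l S_l = ∫ (θ,α)ψ(α)χ(α)|α| Ψ'(α⁻¹,φ'_r) d^×α` (the Hilbert symbol `(θ,α)` giving
the factor `(−1)^l` on the shell `‖α‖ = p^l`) equals
`(−1)^r(pX)^{−r}(1−pX)/(1+pX) + 2p²X(1+X)/((p−1)(1+pX))` for unramified `χ`. -/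
theorem stmt_16 (hp : p ≠ 2) (μ : Measure ℚ_[p]) [μ.IsAddHaarMeasure]
    (hμ : μ {x : ℚ_[p] | ‖x‖ ≤ 1} = 1)
    (ψ : ℚ_[p] → ℂ)
    (hψadd : ∀ x y : ℚ_[p], ψ (x + y) = ψ x * ψ y)
    (hψ1 : ∀ x : ℚ_[p], ‖x‖ ≤ 1 → ψ x = 1)
    (hψnt : ∃ x : ℚ_[p], ‖x‖ = (p : ℝ) ∧ ψ x ≠ 1)
    (r : ℕ)
    -- the element `φ'_r` of `C_c(N'\H/K', ψ_{N'})`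
    (φ : Matrix (Fin 2) (Fin 2) ℚ_[p] → ℂ)
    (hφN : ∀ (x : ℚ_[p]) (g : Matrix (Fin 2) (Fin 2) ℚ_[p]),
      φ (!![1, x; 0, 1] * g) = ψ (-x) * φ g)
    (hφK : ∀ (g k : Matrix (Fin 2) (Fin 2) ℚ_[p]),
      (∀ i j, ‖k i j‖ ≤ 1) → ‖k.det‖ = 1 → φ (g * k) = φ g)
    (hφZ : ∀ (c : ℚ_[p]) (g : Matrix (Fin 2) (Fin 2) ℚ_[p]), c ≠ 0 →
      φ ((c • (1 : Matrix (Fin 2) (Fin 2) ℚ_[p])) * g) = φ g)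
    (hφval : ∀ α : ℚ_[p],
      φ !![α, 0; 0, 1] = if ‖α‖ = (p : ℝ) ^ (-(r : ℤ)) then 1 else 0)
    -- the unramified multiplicative character `χ`
    (χ : ℚ_[p] → ℂ)
    (hχmul : ∀ a b : ℚ_[p], a ≠ 0 → b ≠ 0 → χ (a * b) = χ a * χ b)
    (hχun : ∀ u : ℚ_[p], ‖u‖ = 1 → χ u = 1)
    (X : ℂ) (hX : X = (χ (p : ℚ_[p]))⁻¹) (hpX : (p : ℂ) * X ≠ -1)
    -- the inner shell integrals, the orbital integral `Ψ'(α) = Ψ'(α, φ'_r)`,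
    -- and the Fourier coefficients `S_l`
    (Ish : ℤ → ℚ_[p] → ℂ)
    (hIsh : ∀ (s : ℤ) (α : ℚ_[p]), Ish s α = (1 - 1/(p : ℝ))⁻¹ •
      ∫ a in {a : ℚ_[p] | ‖a‖ = (p : ℝ) ^ s},
        (‖a‖ : ℂ)⁻¹ * φ (!![0, 1; -1, 0] * !![1, α; 0, 1] * !![a, 0; 0, 1]) ∂μ)
    (Ψ' : ℚ_[p] → ℂ)
    (hΨ' : ∀ α : ℚ_[p], Ψ' α = ∑ᶠ s : ℤ, Ish s α)
    (S : ℤ → ℂ)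
    (hS : ∀ l : ℤ, S l = (-1 : ℂ) ^ l * ((1 - 1/(p : ℝ))⁻¹ •
      ∫ α in {α : ℚ_[p] | ‖α‖ = (p : ℝ) ^ l},
        (‖α‖ : ℂ)⁻¹ * (ψ α * χ α * (‖α‖ : ℂ) * Ψ' α⁻¹) ∂μ)) :
    -- for each α only finitely many summands are nonzero
    (∀ α : ℚ_[p], α ≠ 0 → {s : ℤ | Ish s α ≠ 0}.Finite)
    -- only finitely many S_l are nonzero
    ∧ {l : ℤ | S l ≠ 0}.Finite
    -- value of the Fourier transform
    ∧ ∑ᶠ l : ℤ, S l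
        = (-1 : ℂ) ^ r * ((p : ℂ) * X) ^ (-(r : ℤ)) * ((1 - (p : ℂ) * X) / (1 + (p : ℂ) * X))
          + 2 * (p : ℂ) ^ 2 * X * (1 + X) / (((p : ℂ) - 1) * (1 + (p : ℂ) * X)) := by
  have hψ : Padic.IsUnramifiedAddChar ψ := ⟨hψadd, hψ1, hψnt⟩
  have hχ : Padic.IsUnramifiedMulChar χ := ⟨hχmul, hχun⟩
  have hφ : Padic.IsSphericalWhittaker ψ r φ := ⟨hφN, hφK, hφZ, hφval⟩
  obtain rfl : Ψ' = Padic.orbitalIntegral μ φ :=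
    funext fun α ↦ (hΨ' α).trans (finsum_congr fun s ↦ hIsh s α)
  obtain rfl : S = fourierShellTerm p X r := funext fun l ↦ (hS l).trans <| hX ▸
    Padic.neg_one_zpow_mul_shellMulIntegral_eq_fourierShellTerm μ hμ hp hψ hφ hχ l
  refine ⟨fun α hα ↦ ?_, (Finset.finite_toSet _).subset (support_fourierShellTerm_subset _ _ _),
    finsum_fourierShellTerm _ _ _ (mod_cast (Fact.out : p.Prime).ne_zero)
      (mod_cast (Fact.out : p.Prime).ne_one)
      (hX ▸ inv_ne_zero hχ.map_natCast_prime_ne_zero) hpX⟩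
  simp_rw [hIsh]
  exact hφ.hasFiniteSupport_shellMulIntegral μ hμ hα
end
end
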